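/- Let R be a commutative ring and a, b ∈ R. In the Laurent polynomial ring R[v, v⁻¹], set P = v + a + b·v⁻¹. Then: (1) for every j ≥ 0, the constant term (the coefficient of v⁰) of P^j equals Σ_{k≥0} C(j, 2k)·C(2k, k)·a^{j−2k}·b^k; (2) the power series Y ∈ R⟦u⟧ whose coefficient of u^j is the constant term of P^j satisfies Y²·((1 − a·u)² − 4·b·u²) = 1 in R⟦u⟧. -/

import Mathlib

open LaurentPolynomial
open PowerSeries hiding C

namespace TrinomialCT

variable {R : Type*} [CommRing R]

lemma T_mul_apply (k m : ℤ) (q : LaurentPolynomial R) :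
    ((T k : LaurentPolynomial R) * q).coeff m = q.coeff (m - k) := by
  rw [show (T k : LaurentPolynomial R) = AddMonoidAlgebra.single k 1 from rfl,
    AddMonoidAlgebra.coeff_single_mul_apply, one_mul, neg_add_eq_sub]

lemma C_mul_apply (r : R) (m : ℤ) (q : LaurentPolynomial R) :
    (C r * q).coeff m = r * q.coeff m := by
  rw [show (C r : LaurentPolynomial R) = AddMonoidAlgebra.single 0 r from rfl,
    AddMonoidAlgebra.coeff_single_mul_apply, neg_zero, zero_add]

lemma one_apply (m : ℤ) : (1 : LaurentPolynomial R).coeff m = if m = 0 then 1 else 0 := by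
  rw [← T_zero, T_apply]
  simp [eq_comm]

variable (a b : R)

/-- the trinomial -/
noncomputable def Pe : LaurentPolynomial R := T 1 + C a + C b * T (-1)

lemma Pe_mul_apply (q : LaurentPolynomial R) (m : ℤ) :
    (Pe a b * q).coeff m = q.coeff (m - 1) + a * q.coeff m + b * q.coeff (m + 1) := by
  rw [Pe, add_mul, add_mul, mul_assoc, AddMonoidAlgebra.coeff_add, Finsupp.add_apply,
    AddMonoidAlgebra.coeff_add, Finsupp.add_apply,
    T_mul_apply, C_mul_apply, C_mul_apply, T_mul_apply, sub_neg_eq_add]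

lemma Pe_pow_symm (n : ℕ) : ∀ m : ℕ, (Pe a b ^ n).coeff (-(m : ℤ)) = b ^ m * (Pe a b ^ n).coeff m := by
  induction n with
  | zero =>
    intro m
    match m with
    | 0 => simp
    | (m+1) =>
      rw [pow_zero, one_apply, one_apply]
      have h1 : (-((m+1 : ℕ) : ℤ)) ≠ 0 := by push_cast; omega
      have h2 : (((m+1 : ℕ)) : ℤ) ≠ 0 := by push_cast; omega
      rw [if_neg h1, if_neg h2, mul_zero]
  | succ n ih =>
    intro m
    match m with
    | 0 => simp
    | (m+1) =>
      rw [pow_succ', Pe_mul_apply, Pe_mul_apply]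
      have e1 : (-((m+1 : ℕ) : ℤ) - 1) = -(((m+2 : ℕ)) : ℤ) := by push_cast; ring
      have e2 : (-((m+1 : ℕ) : ℤ) + 1) = -(((m : ℕ)) : ℤ) := by push_cast; ring
      have e3 : (((m+1 : ℕ) : ℤ) - 1) = ((m : ℕ) : ℤ) := by push_cast; ring
      have e4 : (((m+1 : ℕ) : ℤ) + 1) = ((m+2 : ℕ) : ℤ) := by push_cast; ring
      rw [e1, e2, e3, e4, ih (m+2), ih (m+1), ih m]
      ring

/-- power series of coefficients -/
noncomputable def Aser (m : ℕ) : PowerSeries R := PowerSeries.mk fun n => (Pe a b ^ n).coeff (m : ℤ)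

lemma A_zero_eq : Aser a b 0 = 1 + X * (PowerSeries.C a * Aser a b 0
    + PowerSeries.C (2 * b) * Aser a b 1) := by
  ext n
  match n with
  | 0 =>
    simp [Aser, one_apply, coeff_zero_eq_constantCoeff_apply, map_add, map_mul, constantCoeff_X]
  | (n+1) =>
    rw [map_add, coeff_succ_X_mul, map_add, coeff_C_mul, coeff_C_mul]
    have hone : (PowerSeries.coeff (n+1)) (1 : PowerSeries R) = 0 := by
      simp [PowerSeries.coeff_one]
    rw [hone, zero_add]
    simp only [Aser, coeff_mk]
    rw [pow_succ', Pe_mul_apply]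
    have hsym := Pe_pow_symm a b n 1
    push_cast at hsym ⊢
    rw [hsym]
    ring

lemma A_succ_eq (m : ℕ) : Aser a b (m+1) = X * (Aser a b m
    + PowerSeries.C a * Aser a b (m+1) + PowerSeries.C b * Aser a b (m+2)) := by
  ext n
  match n with
  | 0 =>
    rw [coeff_zero_eq_constantCoeff_apply, coeff_zero_eq_constantCoeff_apply, map_mul,
      constantCoeff_X, zero_mul]
    show (Pe a b ^ 0).coeff (((m+1:ℕ)):ℤ) = 0
    rw [pow_zero, one_apply, if_neg (by push_cast; omega)]
  | (n+1) =>
    rw [coeff_succ_X_mul, map_add, map_add, coeff_C_mul, coeff_C_mul]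
    simp only [Aser, coeff_mk]
    rw [pow_succ', Pe_mul_apply]
    have e3 : ((((m+1 : ℕ)) : ℤ) - 1) = ((m : ℕ) : ℤ) := by push_cast; ring
    have e4 : ((((m+1 : ℕ)) : ℤ) + 1) = ((m+2 : ℕ) : ℤ) := by push_cast; ring
    rw [e3, e4]

/-- first-passage coefficients -/
noncomputable def h (a b : R) : ℕ → R
  | 0 => 0
  | (n+1) => (if n = 0 then 1 else 0) + a * h a b n
      + b * ∑ i ∈ (Finset.range (n+1)).attach, h a b i.1 * h a b (n - i.1)
  termination_by n => n
  decreasing_by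
  · omega
  · have := i.2; rw [Finset.mem_range] at this; omega
  · have := i.2; rw [Finset.mem_range] at this; omega

lemma h_succ (n : ℕ) : h a b (n+1) = (if n = 0 then 1 else 0) + a * h a b n
    + b * ∑ i ∈ Finset.range (n+1), h a b i * h a b (n - i) := by
  rw [h, ← Finset.sum_attach (Finset.range (n+1)) (fun i => h a b i * h a b (n - i))]

noncomputable def Hser : PowerSeries R := PowerSeries.mk (h a b)

lemma H_eq : Hser a b = X * (1 + PowerSeries.C a * Hser a b
    + PowerSeries.C b * (Hser a b) ^ 2) := by
  ext n
  match n with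
  | 0 =>
    rw [coeff_zero_eq_constantCoeff_apply, coeff_zero_eq_constantCoeff_apply, map_mul,
      constantCoeff_X, zero_mul]
    show h a b 0 = 0
    rw [h]
  | (n+1) =>
    rw [coeff_succ_X_mul, map_add, map_add, coeff_C_mul, coeff_C_mul]
    simp only [Hser, coeff_mk]
    rw [h_succ, sq, PowerSeries.coeff_mul]
    simp only [coeff_mk, PowerSeries.coeff_one]
    rw [Finset.Nat.sum_antidiagonal_eq_sum_range_succ (fun i j => h a b i * h a b j)]

noncomputable def Gser : PowerSeries R :=
  1 - PowerSeries.C a * X - PowerSeries.C (2 * b) * X * Hser a b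

lemma C_two_mul : PowerSeries.C (2 * b) = 2 * PowerSeries.C b := by
  rw [map_mul, map_ofNat]

lemma G_sq : Gser a b ^ 2
    = (1 - PowerSeries.C a * X) ^ 2 - 4 * PowerSeries.C b * X ^ 2 := by
  have key := H_eq a b
  rw [Gser, C_two_mul]
  linear_combination (-(4 * PowerSeries.C b * X)) * key

lemma key_ind : ∀ n : ℕ, ∀ m : ℕ,
    PowerSeries.coeff n (Aser a b m * Gser a b) = PowerSeries.coeff n (Hser a b ^ m) := by
  intro n
  induction n with
  | zero =>
    intro m
    rw [coeff_zero_eq_constantCoeff_apply, coeff_zero_eq_constantCoeff_apply, map_mul, map_pow]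
    have hA : constantCoeff (Aser a b m) = if (m : ℤ) = 0 then 1 else 0 := by
      show (Pe a b ^ 0).coeff ((m:ℕ):ℤ) = _
      rw [pow_zero, one_apply]
    have hG : constantCoeff (Gser a b) = 1 := by
      rw [Gser]
      simp [Hser, constantCoeff_mk]
    have hH : constantCoeff (Hser a b) = 0 := by
      show h a b 0 = 0; rw [h]
    rw [hA, hG, hH, mul_one]
    match m with
    | 0 => simp
    | (m+1) =>
      rw [if_neg (by push_cast; omega), zero_pow (by omega)]
  | succ n ih =>
    intro m
    match m with
    | 0 =>
      have e1 : Aser a b 0 * Gser a b = Gser a b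
          + X * (PowerSeries.C a * (Aser a b 0 * Gser a b)
            + PowerSeries.C (2*b) * (Aser a b 1 * Gser a b)) := by
        conv_lhs => rw [A_zero_eq]
        ring
      rw [pow_zero, e1, map_add, coeff_succ_X_mul, map_add, coeff_C_mul, coeff_C_mul,
        ih 0, ih 1, pow_zero, pow_one]
      have e2 : Gser a b + X * (PowerSeries.C a * 1 + PowerSeries.C (2*b) * Hser a b)
          = 1 := by rw [Gser]; ring
      calc PowerSeries.coeff (n+1) (Gser a b)
            + (a * PowerSeries.coeff n 1 + 2 * b * PowerSeries.coeff n (Hser a b))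
          = PowerSeries.coeff (n+1) (Gser a b
              + X * (PowerSeries.C a * 1 + PowerSeries.C (2*b) * Hser a b)) := by
            simp only [map_add, coeff_succ_X_mul, coeff_C_mul]
        _ = PowerSeries.coeff (n+1) 1 := by rw [e2]
    | (m+1) =>
      have e1 : Aser a b (m+1) * Gser a b = X * (Aser a b m * Gser a b
          + PowerSeries.C a * (Aser a b (m+1) * Gser a b)
          + PowerSeries.C b * (Aser a b (m+2) * Gser a b)) := by
        conv_lhs => rw [A_succ_eq]
        ring
      have e2 : Hser a b ^ (m+1) = X * (Hser a b ^ m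
          + PowerSeries.C a * Hser a b ^ (m+1)
          + PowerSeries.C b * Hser a b ^ (m+2)) := by
        linear_combination (Hser a b ^ m) * (H_eq a b)
      rw [e1, e2, coeff_succ_X_mul, coeff_succ_X_mul, map_add, map_add, map_add, map_add,
        coeff_C_mul, coeff_C_mul, coeff_C_mul, coeff_C_mul, ih m, ih (m+1), ih (m+2)]

lemma A_zero_mul_G : Aser a b 0 * Gser a b = 1 := by
  ext n
  rw [key_ind a b n 0, pow_zero]

lemma part2 : (Aser a b 0) ^ 2 * ((1 - PowerSeries.C a * X) ^ 2
    - 4 * PowerSeries.C b * X ^ 2) = 1 := by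
  rw [← G_sq, ← mul_pow, A_zero_mul_G, one_pow]

lemma C_mul_T_apply (r : R) (s m : ℤ) : (C r * T s : LaurentPolynomial R).coeff m = if s = m then r else 0 := by
  rw [← single_eq_C_mul_T, AddMonoidAlgebra.coeff_single, Finsupp.single_apply]

lemma mul_C_apply (q : LaurentPolynomial R) (r : R) (m : ℤ) : (q * C r).coeff m = q.coeff m * r := by
  rw [show (C r : LaurentPolynomial R) = AddMonoidAlgebra.single 0 r from rfl,
    AddMonoidAlgebra.coeff_mul_single_apply, neg_zero, add_zero]

lemma natCast_eq_C (n : ℕ) : ((n : LaurentPolynomial R)) = C (n : R) := by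
  rw [AddMonoidAlgebra.natCast_def]
  exact single_eq_C (n : R)

lemma S_pow_apply (m : ℕ) : ((T 1 + C b * T (-1) : LaurentPolynomial R) ^ m).coeff 0
    = if m % 2 = 0 then ((m.choose (m/2) : R)) * b ^ (m/2) else 0 := by
  rw [add_pow, AddMonoidAlgebra.coeff_sum, Finset.sum_apply']
  have hterm : ∀ i ∈ Finset.range (m+1),
      (((T 1 : LaurentPolynomial R) ^ i * (C b * T (-1)) ^ (m-i) * (m.choose i : LaurentPolynomial R) : LaurentPolynomial R)).coeff 0
        = if 2*i = m then (m.choose i : R) * b ^ (m-i) else 0 := by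
    intro i hi
    rw [Finset.mem_range] at hi
    rw [T_pow, mul_pow, ← map_pow, T_pow, natCast_eq_C]
    have combine : ∀ (c e : R) (s t : ℤ),
        (T s * (C c * T t) * C e : LaurentPolynomial R) = C (c * e) * T (s + t) := by
      intro c e s t
      rw [map_mul, T_add]; ring
    rw [combine, C_mul_T_apply]
    by_cases hc : 2 * i = m
    · rw [if_pos (by omega), if_pos hc, mul_comm]
    · rw [if_neg (by omega), if_neg hc]
  rw [Finset.sum_congr rfl hterm]
  by_cases hm : m % 2 = 0
  · rw [if_pos hm, Finset.sum_eq_single (m/2)]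
    · rw [if_pos (by omega)]
      have hmm : m - m / 2 = m / 2 := by omega
      rw [hmm]
    · intro i _ hne
      rw [if_neg (by omega)]
    · intro hnot
      exact absurd (Finset.mem_range.mpr (by omega)) hnot
  · rw [if_neg hm, Finset.sum_eq_zero]
    intro i _
    rw [if_neg (by omega)]

lemma Pe_pow_zero_eq (j : ℕ) : (Pe a b ^ j).coeff 0 = ∑ k ∈ Finset.range (j+1),
    (j.choose (2*k) : R) * ((2*k).choose k : R) * a ^ (j - 2*k) * b ^ k := by
  have hPe : Pe a b = (T 1 + C b * T (-1)) + C a := by rw [Pe]; ring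
  rw [hPe, add_pow, AddMonoidAlgebra.coeff_sum, Finset.sum_apply']
  have hterm : ∀ i ∈ Finset.range (j+1),
      (((T 1 + C b * T (-1) : LaurentPolynomial R)) ^ i * (C a) ^ (j-i) * (j.choose i : LaurentPolynomial R)).coeff 0
        = (if i % 2 = 0 then ((i.choose (i/2) : R)) * b ^ (i/2) else 0) * (a ^ (j-i) * (j.choose i : R)) := by
    intro i _
    rw [← map_pow, natCast_eq_C, mul_assoc, ← map_mul, mul_C_apply, S_pow_apply]
  rw [Finset.sum_congr rfl hterm]
  have e1 : ∑ i ∈ Finset.range (j+1),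
        (if i % 2 = 0 then ((i.choose (i/2) : R)) * b ^ (i/2) else 0) * (a ^ (j-i) * (j.choose i : R))
      = ∑ i ∈ (Finset.range (j+1)).filter (fun i => i % 2 = 0),
        (if i % 2 = 0 then ((i.choose (i/2) : R)) * b ^ (i/2) else 0) * (a ^ (j-i) * (j.choose i : R)) := by
    refine (Finset.sum_filter_of_ne ?_).symm
    intro x _ hx
    by_contra hodd
    rw [if_neg hodd, zero_mul] at hx
    exact hx rfl
  have e2 : ∑ i ∈ (Finset.range (j+1)).filter (fun i => i % 2 = 0),
        (if i % 2 = 0 then ((i.choose (i/2) : R)) * b ^ (i/2) else 0) * (a ^ (j-i) * (j.choose i : R))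
      = ∑ k ∈ (Finset.range (j+1)).filter (fun k => 2 * k ≤ j),
        (j.choose (2*k) : R) * ((2*k).choose k : R) * a ^ (j - 2*k) * b ^ k := by
    refine Finset.sum_nbij' (fun i => i / 2) (fun k => 2 * k) ?_ ?_ ?_ ?_ ?_
    · intro i hi; simp only [Finset.mem_filter, Finset.mem_range] at hi ⊢; omega
    · intro k hk; simp only [Finset.mem_filter, Finset.mem_range] at hk ⊢; omega
    · intro i hi; simp only [Finset.mem_filter, Finset.mem_range] at hi
      show 2 * (i / 2) = i; omega
    · intro k hk; simp only [Finset.mem_filter, Finset.mem_range] at hk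
      show (2 * k) / 2 = k; omega
    · intro i hi
      simp only [Finset.mem_filter, Finset.mem_range] at hi
      rw [if_pos hi.2]
      have h2 : 2 * (i / 2) = i := by omega
      rw [h2]
      ring
  have e3 : ∑ k ∈ (Finset.range (j+1)).filter (fun k => 2 * k ≤ j),
        (j.choose (2*k) : R) * ((2*k).choose k : R) * a ^ (j - 2*k) * b ^ k
      = ∑ k ∈ Finset.range (j+1),
        (j.choose (2*k) : R) * ((2*k).choose k : R) * a ^ (j - 2*k) * b ^ k := by
    refine Finset.sum_subset (Finset.filter_subset _ _) ?_
    intro k hk hnk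
    simp only [Finset.mem_filter, Finset.mem_range] at hk hnk
    have hlt : j < 2 * k := by omega
    rw [Nat.choose_eq_zero_of_lt hlt, Nat.cast_zero, zero_mul, zero_mul, zero_mul]
  rw [e1, e2, e3]
end TrinomialCT

open TrinomialCT in
/-- For `P = v + a + b·v⁻¹` in the Laurent polynomial ring `R[v,v⁻¹]`:
(1) the constant term of `P^j` is `Σ_k C(j,2k)·C(2k,k)·a^{j−2k}·b^k`; and
(2) the power series `Y = Σ_j [v⁰](P^j)·u^j` satisfies `Y²·((1 − au)² − 4bu²) = 1`. -/
theorem constant_term_of_trinomial_powers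
    (R : Type*) [CommRing R] (a b : R)
    (P : LaurentPolynomial R)
    (hP : P = LaurentPolynomial.T 1 + LaurentPolynomial.C a
        + LaurentPolynomial.C b * LaurentPolynomial.T (-1)) :
    (∀ j : ℕ, (P ^ j).coeff 0
      = ∑ k ∈ Finset.range (j + 1),
          (j.choose (2 * k) : R) * ((2 * k).choose k : R) * a ^ (j - 2 * k) * b ^ k)
    ∧ (PowerSeries.mk fun j => (P ^ j).coeff 0) ^ 2
        * ((1 - PowerSeries.C a * PowerSeries.X) ^ 2
            - 4 * PowerSeries.C b * PowerSeries.X ^ 2) = 1 := by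
  have hPPe : P = Pe a b := by rw [hP, Pe]
  constructor
  · intro j
    rw [hPPe]
    exact Pe_pow_zero_eq a b j
  · have hA : Aser a b 0 = PowerSeries.mk fun j => (P ^ j).coeff 0 := by
      rw [Aser, hPPe]
      norm_num
    rw [← hA]
    exact part2 a b
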